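/- Let (f_N) be a sequence of differentiable convex functions on an open interval I ⊆ ℝ converging pointwise to a function f on I. If f is differentiable at a point x ∈ I, then f_N'(x) → f'(x) as N → ∞ (Griffith's lemma). -/
import Mathlib

open Filter

/-- Griffith's lemma: for differentiable convex functions `f_N` converging
pointwise on an open interval `I` to `g`, if `g` is differentiable at `x ∈ I`
then `f_N'(x) → g'(x)`. -/
theorem griffiths_lemma (I : Set ℝ) (hIopen : IsOpen I) (hIconv : Convex ℝ I)
    (f : ℕ → ℝ → ℝ) (g : ℝ → ℝ)
    (hconv : ∀ N, ConvexOn ℝ I (f N))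
    (hdiff : ∀ N, ∀ x ∈ I, DifferentiableAt ℝ (f N) x)
    (hlim : ∀ x ∈ I, Tendsto (fun N => f N x) atTop (nhds (g x)))
    (x : ℝ) (hx : x ∈ I) (hgx : DifferentiableAt ℝ g x) :
    Tendsto (fun N => deriv (f N) x) atTop (nhds (deriv g x)) := by
  set d := deriv g x with hd
  rw [Metric.tendsto_nhds]
  intro ε hε
  -- slope of g tends to d
  have hg : Tendsto (slope g x) (nhdsWithin x {x}ᶜ) (nhds d) := by
    rw [← hasDerivAt_iff_tendsto_slope]
    exact hgx.hasDerivAt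
  have hslope : ∀ᶠ y in nhdsWithin x {x}ᶜ,
      y ∈ I ∧ dist (slope g x y) d < ε/3 := by
    refine Filter.Eventually.and ?_ (Metric.tendsto_nhds.mp hg (ε/3) (by positivity))
    exact eventually_nhdsWithin_of_eventually_nhds (hIopen.eventually_mem hx)
  rw [eventually_nhdsWithin_iff] at hslope
  rcases Metric.eventually_nhds_iff_ball.mp hslope with ⟨δ, hδ, hball⟩
  set h := δ/2 with hh
  have hhpos : (0:ℝ) < h := by positivity
  have hmem : ∀ s : ℝ, |s| = h → (x + s ∈ I ∧ dist (slope g x (x + s)) d < ε/3) := by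
    intro s hs
    have hs0 : s ≠ 0 := by intro h0; rw [h0] at hs; simp at hs; linarith
    refine hball (x + s) ?_ ?_
    · rw [Metric.mem_ball, Real.dist_eq, show x + s - x = s by ring, hs, hh]
      linarith
    · simp [hs0]
  have hP := hmem h (abs_of_pos hhpos)
  have hM := hmem (-h) (by rw [abs_neg, abs_of_pos hhpos])
  rw [show x + -h = x - h by ring] at hM
  have hxp : x + h ∈ I := hP.1
  have hxm : x - h ∈ I := hM.1
  have hA : (g (x + h) - g x) / h < d + ε/3 := by
    have := hP.2
    rw [Real.dist_eq, abs_sub_lt_iff] at this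
    have e : slope g x (x + h) = (g (x + h) - g x) / h := by
      rw [slope_def_field]; ring_nf
    rw [e] at this
    linarith [this.1]
  have hB : d - ε/3 < (g x - g (x - h)) / h := by
    have := hM.2
    rw [Real.dist_eq, abs_sub_lt_iff] at this
    have e : slope g x (x - h) = (g x - g (x - h)) / h := by
      rw [slope_def_field, show x - h - x = -h by ring]
      ring
    rw [e] at this
    linarith [this.2]
  -- pointwise convergence at the three points
  have h1 := Metric.tendsto_nhds.mp (hlim (x + h) hxp) (ε*h/3) (by positivity)
  have h2 := Metric.tendsto_nhds.mp (hlim x hx) (ε*h/3) (by positivity)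
  have h3 := Metric.tendsto_nhds.mp (hlim (x - h) hxm) (ε*h/3) (by positivity)
  filter_upwards [h1, h2, h3] with N e1 e2 e3
  rw [Real.dist_eq, abs_sub_lt_iff] at e1 e2 e3 ⊢
  -- convexity sandwich
  have hu : deriv (f N) x ≤ (f N (x + h) - f N x) / h := by
    have := (hconv N).deriv_le_slope hx hxp (by linarith) (hdiff N x hx)
    rwa [slope_def_field, show x + h - x = h by ring] at this
  have hl : (f N x - f N (x - h)) / h ≤ deriv (f N) x := by
    have := (hconv N).slope_le_deriv hxm hx (by linarith) (hdiff N x hx)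
    rwa [slope_def_field, show x - (x - h) = h by ring] at this
  have hA' : g (x + h) - g x < (d + ε/3) * h := by
    rw [← div_lt_iff₀ hhpos] at *
    linarith [hA]
  have hB' : (d - ε/3) * h < g x - g (x - h) := by
    rw [← lt_div_iff₀ hhpos]
    linarith [hB]
  have hu' : deriv (f N) x * h ≤ f N (x + h) - f N x := by
    rw [← le_div_iff₀ hhpos]; exact hu
  have hl' : f N x - f N (x - h) ≤ deriv (f N) x * h := by
    rw [← div_le_iff₀ hhpos]; exact hl
  constructor
  · nlinarith [hu', hA', e1.1, e2.2, hhpos]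
  · nlinarith [hl', hB', e2.1, e3.2, hhpos]
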